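/- arXiv:2602.12374 — 2 statements merged into one kernel-verified Lean document; each statement's English description precedes it below -/
import Mathlib

section
/- If a finite graph G contains no induced subgraph isomorphic to K_{1,3} (the claw), then γ(G) = i(G). -/
open SimpleGraph

/-- `D` is a dominating set: every vertex outside `D` has a neighbor in `D`. -/
def IsDominating {V : Type*} (G : SimpleGraph V) (D : Set V) : Prop :=
  ∀ v ∉ D, ∃ u ∈ D, G.Adj u v

/-- `S` is an independent set. -/
def IsIndepSet {V : Type*} (G : SimpleGraph V) (S : Set V) : Prop :=
  ∀ u ∈ S, ∀ v ∈ S, ¬ G.Adj u v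

/-- `S` is a maximal independent set. -/
def IsMaxIndep {V : Type*} (G : SimpleGraph V) (S : Set V) : Prop :=
  _root_.IsIndepSet G S ∧ ∀ T, _root_.IsIndepSet G T → S ⊆ T → T = S

/-- The domination number γ(G). -/
noncomputable def domNum {V : Type*} [Fintype V] (G : SimpleGraph V) : ℕ :=
  sInf {n | ∃ D : Finset V, IsDominating G ↑D ∧ D.card = n}

/-- The independent domination number i(G): minimum size of a maximal independent set. -/
noncomputable def indomNum {V : Type*} [Fintype V] (G : SimpleGraph V) : ℕ :=
  sInf {n | ∃ S : Finset V, IsMaxIndep G ↑S ∧ S.card = n}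

/-- `G` is domination perfect: γ(H) = i(H) for every induced subgraph `H`. -/
def DomPerfect {V : Type*} [Fintype V] (G : SimpleGraph V) : Prop :=
  ∀ s : Finset V, domNum (G.induce (↑s : Set V)) = indomNum (G.induce (↑s : Set V))

/-- `G` is minimal domination imperfect. -/
def MinImperfect {V : Type*} [Fintype V] (G : SimpleGraph V) : Prop :=
  ¬ DomPerfect G ∧ ∀ s : Finset V, s ≠ Finset.univ → DomPerfect (G.induce (↑s : Set V))

/-- The double star S_{2,2}: centers 0,1; leaves 2,3 at 0 and 4,5 at 1. -/
def doubleStar : SimpleGraph (Fin 6) :=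
  SimpleGraph.fromRel (fun a b =>
    (a = 0 ∧ b = 1) ∨ (a = 0 ∧ b = 2) ∨ (a = 0 ∧ b = 3) ∨ (a = 1 ∧ b = 4) ∨ (a = 1 ∧ b = 5))

/-!
Allan–Laskar. Let `D` be a minimum dominating set, and extend a maximal independent subset `I₀`
of `D` to a maximal independent set `I` of `G`. Every vertex of `I \ D` has a neighbour in
`D \ I`, and no `d ∈ D \ I` has two neighbours `x ≠ y` in `I \ D`: since `d ∉ I₀`, it has a
neighbour `z ∈ I₀`, and then `d; x, y, z` would be a claw. Hence `|I \ D| ≤ |D \ I|`, so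
`i(G) ≤ |I| ≤ |D| = γ(G)`; conversely a maximal independent set is dominating.
-/

open Finset

section Domination

variable {V : Type*} {G : SimpleGraph V}

theorem adj_or_adj_or_adj_of_clawFree
    (hfree : IsEmpty (completeBipartiteGraph (Fin 1) (Fin 3) ↪g G))
    {d x y z : V} (hx : G.Adj d x) (hy : G.Adj d y) (hz : G.Adj d z)
    (hxy : x ≠ y) (hxz : x ≠ z) (hyz : y ≠ z) :
    G.Adj x y ∨ G.Adj x z ∨ G.Adj y z := by
  by_contra! h
  refine hfree.false ⟨⟨Sum.elim (fun _ => d) ![x, y, z], ?_⟩, ?_⟩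
  · refine Function.Injective.sumElim (fun _ _ _ => Subsingleton.elim _ _) ?_ ?_
    · intro a b hab
      fin_cases a <;> fin_cases b <;> simp_all
    · intro a b
      fin_cases b <;> simp [hx.ne, hy.ne, hz.ne]
  · rintro (a | a) (b | b) <;> [skip; fin_cases b; fin_cases a; (fin_cases a <;> fin_cases b)] <;>
      simp_all [G.adj_comm]

theorem isMaxIndep_iff_maximal {S : Set V} : IsMaxIndep G S ↔ Maximal (_root_.IsIndepSet G) S :=
  ⟨fun h => ⟨h.1, fun T hT hST => (h.2 T hT hST).le⟩,
    fun h => ⟨h.1, fun _ hT hST => (h.eq_of_subset hT hST).symm⟩⟩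

theorem isIndepSet_insert {S : Set V} {v : V} :
    _root_.IsIndepSet G (insert v S) ↔ _root_.IsIndepSet G S ∧ ∀ u ∈ S, ¬G.Adj v u := by
  simp only [_root_.IsIndepSet, Set.mem_insert_iff, forall_eq_or_imp, G.irrefl, not_false_eq_true,
    true_and, G.adj_comm _ v, forall_and]
  tauto

theorem exists_adj_of_maximal_isIndepSet_subset {A I : Set V}
    (hI : Maximal (fun T => _root_.IsIndepSet G T ∧ T ⊆ A) I) {v : V} (hvA : v ∈ A)
    (hvI : v ∉ I) :
    ∃ u ∈ I, G.Adj u v := by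
  by_contra! h
  have hindep : _root_.IsIndepSet G (insert v I) :=
    isIndepSet_insert.2 ⟨hI.prop.1, fun u hu huv => h u hu huv.symm⟩
  exact hvI (hI.mem_of_prop_insert ⟨hindep, Set.insert_subset hvA hI.prop.2⟩)

theorem IsMaxIndep.isDominating {S : Set V} (hS : IsMaxIndep G S) : IsDominating G S := by
  intro v hv
  refine exists_adj_of_maximal_isIndepSet_subset (A := Set.univ) ?_ (Set.mem_univ v) hv
  simpa [Set.subset_univ, and_true] using isMaxIndep_iff_maximal.1 hS

theorem exists_isMaxIndep_superset [Finite V] {S : Set V} (hS : _root_.IsIndepSet G S) :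
    ∃ T, S ⊆ T ∧ IsMaxIndep G T := by
  obtain ⟨T, hST, hT⟩ := Finite.exists_le_maximal hS
  exact ⟨T, hST, isMaxIndep_iff_maximal.2 hT⟩

theorem exists_maximal_isIndepSet_subset [Finite V] (A : Set V) :
    ∃ I, Maximal (fun T => _root_.IsIndepSet G T ∧ T ⊆ A) I := by
  obtain ⟨I, -, hI⟩ :=
    Finite.exists_le_maximal (p := fun T => _root_.IsIndepSet G T ∧ T ⊆ A) (a := ∅)
      ⟨fun _ h => h.elim, Set.empty_subset A⟩
  exact ⟨I, hI⟩

theorem card_le_card_of_clawFree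
    (hfree : IsEmpty (completeBipartiteGraph (Fin 1) (Fin 3) ↪g G))
    {D I : Finset V} {I₀ : Set V} (hD : IsDominating G D)
    (hI₀ : Maximal (fun T => _root_.IsIndepSet G T ∧ T ⊆ D) I₀) (hI₀I : I₀ ⊆ I)
    (hI : _root_.IsIndepSet G I) : #I ≤ #D := by
  classical
  rw [← card_sdiff_le_card_sdiff_iff]
  refine card_le_card_of_forall_subsingleton (fun x d => G.Adj d x) ?_ ?_
  · intro x hx
    obtain ⟨hxI, hxD⟩ := mem_sdiff.1 hx
    obtain ⟨d, hdD, hdx⟩ := hD x (by simpa using hxD)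
    exact ⟨d, mem_sdiff.2 ⟨hdD, fun hdI => hI d hdI x hxI hdx⟩, hdx⟩
  · rintro d hd x ⟨hx, hdx⟩ y ⟨hy, hdy⟩
    obtain ⟨hdD, hdI⟩ := mem_sdiff.1 hd
    obtain ⟨hxI, hxD⟩ := mem_sdiff.1 hx
    obtain ⟨hyI, hyD⟩ := mem_sdiff.1 hy
    obtain ⟨z, hzI₀, hzd⟩ :=
      exists_adj_of_maximal_isIndepSet_subset hI₀ hdD fun h => hdI (hI₀I h)
    have hzD : z ∈ D := hI₀.prop.2 hzI₀
    by_contra hxy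
    rcases adj_or_adj_or_adj_of_clawFree hfree hdx hdy hzd.symm hxy (by grind) (by grind) with
      h | h | h
    · exact hI x hxI y hyI h
    · exact hI x hxI z (hI₀I hzI₀) h
    · exact hI y hyI z (hI₀I hzI₀) h

theorem exists_isMaxIndep_card_le_of_clawFree [Finite V]
    (hfree : IsEmpty (completeBipartiteGraph (Fin 1) (Fin 3) ↪g G)) {D : Finset V}
    (hD : IsDominating G D) : ∃ I : Finset V, IsMaxIndep G I ∧ #I ≤ #D := by
  obtain ⟨I₀, hI₀⟩ := exists_maximal_isIndepSet_subset (G := G) D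
  obtain ⟨I, hI₀I, hI⟩ := exists_isMaxIndep_superset hI₀.prop.1
  lift I to Finset V using I.toFinite
  exact ⟨I, hI, card_le_card_of_clawFree hfree hD hI₀ hI₀I hI.1⟩

section Numbers

variable [Fintype V]

theorem domNum_le {D : Finset V} (hD : IsDominating G D) : domNum G ≤ #D :=
  Nat.sInf_le ⟨D, hD, rfl⟩

theorem indomNum_le {S : Finset V} (hS : IsMaxIndep G S) : indomNum G ≤ #S :=
  Nat.sInf_le ⟨S, hS, rfl⟩

variable (G)

theorem exists_isDominating_card_eq_domNum : ∃ D : Finset V, IsDominating G D ∧ #D = domNum G :=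
  Nat.sInf_mem (s := {n | ∃ D : Finset V, IsDominating G D ∧ #D = n})
    ⟨_, univ, fun v hv => (hv (mem_coe.2 (mem_univ v))).elim, rfl⟩

theorem exists_isMaxIndep_card_eq_indomNum :
    ∃ S : Finset V, IsMaxIndep G S ∧ #S = indomNum G := by
  obtain ⟨S, -, hS⟩ := exists_isMaxIndep_superset (G := G) (S := ∅) fun _ h => h.elim
  lift S to Finset V using S.toFinite
  exact Nat.sInf_mem (s := {n | ∃ S : Finset V, IsMaxIndep G S ∧ #S = n}) ⟨_, S, hS, rfl⟩

end Numbers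

end Domination

theorem stmt1 {V : Type*} [Fintype V] (G : SimpleGraph V)
    (hfree : IsEmpty (completeBipartiteGraph (Fin 1) (Fin 3) ↪g G)) :
    domNum G = indomNum G := by
  obtain ⟨S, hS, hS_card⟩ := exists_isMaxIndep_card_eq_indomNum G
  obtain ⟨D, hD, hD_card⟩ := exists_isDominating_card_eq_domNum G
  obtain ⟨I, hI, hID⟩ := exists_isMaxIndep_card_le_of_clawFree hfree hD
  apply le_antisymm
  · exact hS_card ▸ domNum_le hS.isDominating
  · exact hD_card ▸ (indomNum_le hI).trans hID
end

section
/- Let F be a minimal domination imperfect graph, let D be a minimum dominating set of F minimizing the number of edges in the subgraph induced by D, and let uv be an edge in D. Then every vertex of F outside D that is dominated only by u and/or v together with u and v forms all of V(F); that is, V(F) = A ∪ B ∪ C ∪ {u,v}, where A = {x ∉ D : N(x) ∩ D = {u}}, B = {x ∉ D : N(x) ∩ D = {v}}, C = {x ∉ D : N(x) ∩ D = {u,v}}. -/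
open SimpleGraph

/-- The number of edges of `F` with both endpoints in `D`. -/
noncomputable def edgesIn {V : Type*} (F : SimpleGraph V) (D : Finset V) : ℕ :=
  {e ∈ F.edgeSet | ∀ x ∈ e, x ∈ (↑D : Set V)}.ncard

/-!
Let `R` be `{u, v}` together with the vertices outside `D` all of whose `D`-neighbours lie in
`{u, v}`. If `R ≠ V(F)`, then `F[R]` is domination perfect and dominated by `{u, v}`, so it has
an independent dominating set `I` with `|I| ≤ 2`. Then `D' = (D \ {u, v}) ∪ I` dominates `F`
(vertices outside `R` keep a dominator in `D \ {u, v}`) and `|D'| ≤ |D|`. A vertex of `I` outside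
`D` has no neighbour in `D \ {u, v}` and `I` is independent, so every edge inside `D'` lies inside
`D`, while the edge `uv` is lost: `D'` contradicts the choice of `D`.
-/

def DominatesOn {V : Type*} (G : SimpleGraph V) (D s : Set V) : Prop :=
  ∀ x ∈ s, x ∉ D → ∃ w ∈ D, G.Adj w x

section Transfer

variable {W V : Type*} {H : SimpleGraph W} {G : SimpleGraph V}

theorem IsMaxIndep.isDominating_s9 {S : Set W} (h : IsMaxIndep H S) : IsDominating H S := by
  intro x hx
  by_contra! hx'
  have hins : _root_.IsIndepSet H (insert x S) := by
    rintro a (rfl | ha) b (rfl | hb)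
    · exact H.irrefl
    · exact fun hab => hx' b hb hab.symm
    · exact hx' a ha
    · exact h.1 a ha b hb
  exact hx (h.2 _ hins (Set.subset_insert x S) ▸ Set.mem_insert x S)

theorem exists_isMaxIndep [Finite W] (H : SimpleGraph W) : ∃ S : Set W, IsMaxIndep H S := by
  obtain ⟨S, -, hS⟩ := (Set.toFinite {S : Set W | _root_.IsIndepSet H S}).exists_le_maximal
    (a := ∅) (by simp [_root_.IsIndepSet])
  exact ⟨S, hS.prop, fun T hT hST => (hS.eq_of_le hT hST).symm⟩

theorem exists_isMaxIndep_card_le [Fintype W] (hH : domNum H = indomNum H) {T : Finset W}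
    (hT : IsDominating H T) : ∃ S : Finset W, IsMaxIndep H S ∧ S.card ≤ T.card := by
  classical
  obtain ⟨S, hS⟩ := exists_isMaxIndep H
  obtain ⟨I, hI, hIcard⟩ := Nat.sInf_mem (s := {n | ∃ S : Finset W, IsMaxIndep H ↑S ∧ S.card = n})
    ⟨_, S.toFinset, by simpa using hS, rfl⟩
  refine ⟨I, hI, ?_⟩
  rw [hIcard]
  change indomNum H ≤ _
  exact hH ▸ Nat.sInf_le ⟨T, hT, rfl⟩

theorem IsIndepSet.image (φ : H ↪g G) {S : Set W} (h : _root_.IsIndepSet H S) :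
    _root_.IsIndepSet G (φ '' S) := by
  rintro _ ⟨a, ha, rfl⟩ _ ⟨b, hb, rfl⟩
  rw [φ.map_adj_iff]
  exact h a ha b hb

theorem isDominating_iff_dominatesOn_image (φ : H ↪g G) {S : Set W} :
    IsDominating H S ↔ DominatesOn G (φ '' S) (Set.range φ) := by
  constructor
  · rintro h _ ⟨x, rfl⟩ hx
    obtain ⟨w, hw, hwx⟩ := h x fun hxS => hx ⟨x, hxS, rfl⟩
    exact ⟨φ w, ⟨w, hw, rfl⟩, φ.map_adj_iff.2 hwx⟩
  · intro h x hx
    obtain ⟨_, ⟨w, hw, rfl⟩, hwx⟩ := h (φ x) ⟨x, rfl⟩ (by rwa [φ.injective.mem_set_image])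
    exact ⟨w, hw, φ.map_adj_iff.1 hwx⟩

theorem exists_isIndepSet_dominatesOn_card_le {s : Finset V}
    (hs : DomPerfect (G.induce (s : Set V))) {T : Finset V} (hTs : T ⊆ s)
    (hT : DominatesOn G T s) :
    ∃ I : Finset V, I ⊆ s ∧ _root_.IsIndepSet G I ∧ DominatesOn G I s ∧ I.card ≤ T.card := by
  -- `DomPerfect` speaks only of induced subgraphs, so `G[s]` appears as `G[s][univ]`.
  let φ : (G.induce (s : Set V)).induce ↑(Finset.univ : Finset (s : Set V)) ↪g G :=
    (Embedding.induce _).comp (Embedding.induce _)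
  have hrange : Set.range φ = s := by
    ext x
    constructor
    · rintro ⟨⟨⟨x, hx⟩, -⟩, rfl⟩
      exact hx
    · exact fun hx => ⟨⟨⟨x, hx⟩, by simp⟩, rfl⟩
  have hcoe (S : Finset _) : (S.map φ.toEmbedding : Set V) = φ '' S := Finset.coe_map _ _
  have hTφ : T ⊆ Finset.univ.map φ.toEmbedding := by
    intro x hx
    obtain ⟨z, rfl⟩ : x ∈ Set.range φ := by rw [hrange]; exact hTs hx
    exact Finset.mem_map_of_mem _ (Finset.mem_univ z)
  obtain ⟨T', -, rfl⟩ := Finset.subset_map_iff.1 hTφ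
  rw [hcoe] at hT
  obtain ⟨S, hS, hcard⟩ := exists_isMaxIndep_card_le (hs Finset.univ)
    ((isDominating_iff_dominatesOn_image φ).2 fun x hx => hT x (hrange.le hx))
  refine ⟨S.map φ.toEmbedding, ?_, ?_, ?_, by rwa [Finset.card_map, Finset.card_map]⟩
  · rw [← Finset.coe_subset, hcoe]
    exact (Set.image_subset_range φ S).trans hrange.le
  · rw [hcoe]
    exact hS.1.image φ
  · rw [hcoe]
    exact fun x hx => (isDominating_iff_dominatesOn_image φ).1 hS.isDominating_s9 x (hrange.ge hx)

end Transfer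

section PairRegion

variable {V : Type*} {F : SimpleGraph V}

theorem edgesIn_lt_edgesIn [Finite V] {D D' : Finset V}
    (hD' : ∀ a b, F.Adj a b → a ∈ D' → b ∈ D' → a ∈ D) {u v : V} (huv : F.Adj u v)
    (hu : u ∈ D) (hv : v ∈ D) (huv' : u ∉ D' ∨ v ∉ D') : edgesIn F D' < edgesIn F D := by
  refine Set.ncard_lt_ncard ((Set.ssubset_iff_of_subset ?_).2 ⟨s(u, v), ?_, ?_⟩) (Set.toFinite _)
  · rintro ⟨a, b⟩ ⟨hab, hmem⟩
    simp only [Sym2.mem_iff, forall_eq_or_imp, forall_eq, Finset.mem_coe] at hmem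
    refine ⟨hab, ?_⟩
    simp only [Sym2.mem_iff, forall_eq_or_imp, forall_eq, Finset.mem_coe]
    exact ⟨hD' a b hab hmem.1 hmem.2, hD' b a hab.symm hmem.2 hmem.1⟩
  · exact ⟨huv, by simp [hu, hv]⟩
  · rintro ⟨-, hmem⟩
    simp only [Sym2.mem_iff, forall_eq_or_imp, forall_eq, Finset.mem_coe] at hmem
    tauto

theorem IsDominating.inter_adj_eq_singleton_or_pair {D : Set V} (hD : IsDominating F D) {u v x : V}
    (hxD : x ∉ D) (hxN : ∀ w ∈ D, F.Adj w x → w = u ∨ w = v) :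
    D ∩ {w | F.Adj w x} = {u} ∨ D ∩ {w | F.Adj w x} = {v} ∨ D ∩ {w | F.Adj w x} = {u, v} := by
  obtain ⟨w, hwD, hwx⟩ := hD x hxD
  exact (Set.Nonempty.subset_pair_iff_eq (s := D ∩ {w | F.Adj w x}) ⟨w, hwD, hwx⟩).1
    fun w hw => hxN w hw.1 hw.2

variable [Fintype V]

open Classical in
/-- The set `{u, v} ∪ A ∪ B ∪ C` of the statement, with `A`, `B`, `C` not required to have a
neighbour in `D`. -/
noncomputable def pairRegion (F : SimpleGraph V) (D : Finset V) (u v : V) : Finset V :=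
  Finset.univ.filter fun x => x = u ∨ x = v ∨ (x ∉ D ∧ ∀ w ∈ D, F.Adj w x → w = u ∨ w = v)

variable {D : Finset V} {u v : V}

theorem mem_pairRegion {x : V} : x ∈ pairRegion F D u v ↔
    x = u ∨ x = v ∨ (x ∉ D ∧ ∀ w ∈ D, F.Adj w x → w = u ∨ w = v) := by
  simp [pairRegion]

theorem dominatesOn_pairRegion [DecidableEq V] (hD : IsDominating F D) :
    DominatesOn F ({u, v} : Finset V) (pairRegion F D u v) := by
  intro x hx hxuv
  rcases mem_pairRegion.1 hx with rfl | rfl | ⟨hxD, hxN⟩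
  · simp at hxuv
  · simp at hxuv
  · obtain ⟨w, hwD, hwx⟩ := hD x hxD
    exact ⟨w, by simpa using hxN w hwD hwx, hwx⟩

theorem isDominating_sdiff_union [DecidableEq V] {I : Finset V}
    (hI : DominatesOn F I (pairRegion F D u v)) : IsDominating F ↑(D \ {u, v} ∪ I) := by
  intro x hx
  have hxI : x ∉ I := fun h => hx (by simp [h])
  by_cases hxs : x ∈ pairRegion F D u v
  · obtain ⟨w, hw, hwx⟩ := hI x hxs hxI
    exact ⟨w, by simp [Finset.mem_coe.1 hw], hwx⟩
  · rw [mem_pairRegion] at hxs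
    push Not at hxs
    obtain ⟨hxu, hxv, hxN⟩ := hxs
    obtain ⟨w, hwD, hwx, hwu, hwv⟩ := hxN fun hxD => hx (by simp [hxD, hxu, hxv])
    exact ⟨w, by simp [hwD, hwu, hwv], hwx⟩

theorem exists_dominating_card_le_edgesIn_lt [DecidableEq V] (hD : IsDominating F D)
    (hu : u ∈ D) (hv : v ∈ D) (huv : F.Adj u v)
    (hperf : DomPerfect (F.induce (pairRegion F D u v : Set V))) :
    ∃ D' : Finset V, IsDominating F D' ∧ D'.card ≤ D.card ∧ edgesIn F D' < edgesIn F D := by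
  obtain ⟨I, hIs, hIind, hIdom, hIcard⟩ := exists_isIndepSet_dominatesOn_card_le hperf
    (T := {u, v}) (by simp [Finset.insert_subset_iff, mem_pairRegion]) (dominatesOn_pairRegion hD)
  refine ⟨D \ {u, v} ∪ I, isDominating_sdiff_union hIdom, ?_, edgesIn_lt_edgesIn ?_ huv hu hv ?_⟩
  · have huvD : ({u, v} : Finset V) ⊆ D := Finset.insert_subset hu (Finset.singleton_subset_iff.2 hv)
    calc (D \ {u, v} ∪ I).card ≤ (D \ {u, v}).card + I.card := Finset.card_union_le _ _
      _ ≤ (D \ {u, v}).card + ({u, v} : Finset V).card := by gcongr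
      _ = D.card := Finset.card_sdiff_add_card_eq_card huvD
  · intro a b hab ha hb
    simp only [Finset.mem_union, Finset.mem_sdiff] at ha hb
    rcases ha with ⟨haD, -⟩ | haI
    · exact haD
    rcases mem_pairRegion.1 (hIs haI) with rfl | rfl | ⟨-, haN⟩
    · exact hu
    · exact hv
    rcases hb with ⟨hbD, hbuv⟩ | hbI
    · exact absurd (haN b hbD hab.symm) (by simpa using hbuv)
    · exact absurd hab (hIind a haI b hbI)
  · by_contra! h
    simp only [Finset.mem_union, Finset.mem_sdiff, Finset.mem_insert, Finset.mem_singleton,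
      true_or, or_true, not_true, and_false, false_or] at h
    exact hIind u h.1 v h.2 huv

end PairRegion

theorem stmt9 {V : Type*} [Fintype V] (F : SimpleGraph V)
    (hmin : MinImperfect F)
    (D : Finset V) (hD : IsDominating F ↑D) (hcard : D.card = domNum F)
    (hedges : ∀ D' : Finset V, IsDominating F ↑D' → D'.card = domNum F →
      edgesIn F D ≤ edgesIn F D')
    (u v : V) (hu : u ∈ D) (hv : v ∈ D) (huv : F.Adj u v) :
    ∀ x : V, x = u ∨ x = v ∨
      (x ∉ D ∧
        ((↑D : Set V) ∩ {w | F.Adj w x} = {u} ∨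
         (↑D : Set V) ∩ {w | F.Adj w x} = {v} ∨
         (↑D : Set V) ∩ {w | F.Adj w x} = {u, v})) := by
  classical
  have hall : pairRegion F D u v = Finset.univ := by
    by_contra hne
    obtain ⟨D', hD', hcard', hlt⟩ :=
      exists_dominating_card_le_edgesIn_lt hD hu hv huv (hmin.2 _ hne)
    have hD'min : D'.card = domNum F := le_antisymm (hcard ▸ hcard') (Nat.sInf_le ⟨D', hD', rfl⟩)
    exact (hedges D' hD' hD'min).not_gt hlt
  intro x
  rcases mem_pairRegion.1 (hall ▸ Finset.mem_univ x) with hxu | hxv | ⟨hxD, hxN⟩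
  · exact Or.inl hxu
  · exact Or.inr (Or.inl hxv)
  · exact Or.inr (Or.inr ⟨hxD, hD.inter_adj_eq_singleton_or_pair hxD hxN⟩)
end
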